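/- arXiv:1711.07686 — 2 statements merged into one kernel-verified Lean document; each statement's English description precedes it below -/
import Mathlib

section
/- Let Φ⃗ : D → ℝ³ be a smooth conformal immersion with conformal factor e^λ, unit normal n⃗, and mean curvature H. Then n⃗ satisfies the structural identity ∇^⊥n⃗ = n⃗ × ∇n⃗ - 2H ∇^⊥Φ⃗. -/
open MeasureTheory Metric Real
open scoped ENNReal NNReal RealInnerProductSpace

noncomputable section

abbrev E2 := EuclideanSpace ℝ (Fin 2)
abbrev E3 := EuclideanSpace ℝ (Fin 3)

/-- `i`-th partial derivative. -/
def pd {F : Type*} [NormedAddCommGroup F] [NormedSpace ℝ F]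
    (i : Fin 2) (f : E2 → F) (x : E2) : F :=
  fderiv ℝ f x (EuclideanSpace.single i 1)

/-- Laplacian on `ℝ²`. -/
def lap {F : Type*} [NormedAddCommGroup F] [NormedSpace ℝ F]
    (f : E2 → F) (x : E2) : F :=
  pd 0 (pd 0 f) x + pd 1 (pd 1 f) x

/-- cross product in `ℝ³`. -/
def cross3 (u v : E3) : E3 :=
  (WithLp.equiv 2 (Fin 3 → ℝ)).symm
    (crossProduct (WithLp.equiv 2 (Fin 3 → ℝ) u) (WithLp.equiv 2 (Fin 3 → ℝ) v))

/-- weak `L^p` (Marcinkiewicz) quasinorm of `f` on the set `s`. -/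
def wnorm (p : ℝ) (f : E2 → ℝ) (s : Set E2) : ℝ≥0∞ :=
  ⨆ t : ℝ≥0, (t : ℝ≥0∞) * (volume {x ∈ s | (t : ℝ) < |f x|}) ^ (1 / p)

/-- Lorentz `L^{p,q}` quasinorm (with `q = ∞` giving weak `L^p`). -/
def lorentzNorm (p : ℝ) (q : ℝ≥0∞) (f : E2 → ℝ) (s : Set E2) : ℝ≥0∞ :=
  if q = ⊤ then wnorm p f s
  else (∫⁻ t in Set.Ioi (0 : ℝ),
    (ENNReal.ofReal t * (volume {x ∈ s | t < |f x|}) ^ (1 / p)) ^ q.toReal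
      / ENNReal.ofReal t) ^ (1 / q.toReal)

/-! ### Auxiliary algebra lemmas for `cross3` and `E3` -/

open scoped Topology

private lemma inner3 (u v : E3) : ⟪u, v⟫ = u 0 * v 0 + u 1 * v 1 + u 2 * v 2 := by
  simp [PiLp.inner_apply, Fin.sum_univ_three, RCLike.inner_apply, conj_trivial]
  ring

private lemma cross3_0 (u v : E3) : cross3 u v 0 = u 1 * v 2 - u 2 * v 1 := by
  simp [cross3, cross_apply, WithLp.equiv_symm_apply, PiLp.toLp_apply]
private lemma cross3_1 (u v : E3) : cross3 u v 1 = u 2 * v 0 - u 0 * v 2 := by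
  simp [cross3, cross_apply, WithLp.equiv_symm_apply, PiLp.toLp_apply]
private lemma cross3_2 (u v : E3) : cross3 u v 2 = u 0 * v 1 - u 1 * v 0 := by
  simp [cross3, cross_apply, WithLp.equiv_symm_apply, PiLp.toLp_apply]

private lemma E3ext {u v : E3} (h0 : u 0 = v 0) (h1 : u 1 = v 1) (h2 : u 2 = v 2) : u = v := by
  refine PiLp.ext fun i => ?_
  fin_cases i <;> assumption

private lemma cross3_smul_right (c : ℝ) (u v : E3) : cross3 u (c • v) = c • cross3 u v := by
  refine E3ext ?_ ?_ ?_ <;>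
    simp only [cross3_0, cross3_1, cross3_2, PiLp.smul_apply, smul_eq_mul] <;> ring

private lemma inner_cross_left (u v : E3) : ⟪cross3 u v, u⟫ = 0 := by
  simp only [inner3, cross3_0, cross3_1, cross3_2]; ring

private lemma inner_cross_right (u v : E3) : ⟪cross3 u v, v⟫ = 0 := by
  simp only [inner3, cross3_0, cross3_1, cross3_2]; ring

private lemma triple3 (u v w : E3) : ⟪cross3 u v, w⟫ = ⟪cross3 w u, v⟫ := by
  simp only [inner3, cross3_0, cross3_1, cross3_2]; ring

private lemma cross_cross3 (u v w : E3) : cross3 u (cross3 v w) = ⟪u, w⟫ • v - ⟪u, v⟫ • w := by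
  refine E3ext ?_ ?_ ?_ <;>
    simp only [inner3, cross3_0, cross3_1, cross3_2, PiLp.sub_apply, PiLp.smul_apply,
      smul_eq_mul] <;> ring

private lemma lagrange3 (u v : E3) : ⟪cross3 u v, cross3 u v⟫ = ⟪u, u⟫ * ⟪v, v⟫ - ⟪u, v⟫ ^ 2 := by
  simp only [inner3, cross3_0, cross3_1, cross3_2]; ring

private lemma orth_zero (f : Fin 3 → E3) (hf : Orthonormal ℝ f) (w : E3)
    (hw : ∀ i, ⟪f i, w⟫ = 0) : w = 0 := by
  have hcard : Fintype.card (Fin 3) = Module.finrank ℝ E3 := by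
    simp [finrank_euclideanSpace]
  let B := basisOfOrthonormalOfCardEqFinrank hf hcard
  have hB : ∀ i, B i = f i := fun i => by
    rw [coe_basisOfOrthonormalOfCardEqFinrank]
  have hww : ⟪w, w⟫ = 0 := by
    have h1 : ⟪w, w⟫ = ⟪∑ i, B.repr w i • B i, w⟫ := by rw [B.sum_repr w]
    rw [h1, sum_inner]
    exact Finset.sum_eq_zero fun i _ => by
      rw [real_inner_smul_left, hB, hw, mul_zero]
  exact inner_self_eq_zero.mp hww

/-- the cross product as a continuous bilinear map -/
private def crossL : E3 →ₗ[ℝ] E3 →ₗ[ℝ] E3 :=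
  ((crossProduct.compl₁₂ (WithLp.linearEquiv 2 ℝ (Fin 3 → ℝ)).toLinearMap
    (WithLp.linearEquiv 2 ℝ (Fin 3 → ℝ)).toLinearMap).compr₂
    (WithLp.linearEquiv 2 ℝ (Fin 3 → ℝ)).symm.toLinearMap)

private def crossCLM : E3 →L[ℝ] E3 →L[ℝ] E3 :=
  LinearMap.toContinuousLinearMap
    ((LinearMap.toContinuousLinearMap :
        (E3 →ₗ[ℝ] E3) ≃ₗ[ℝ] (E3 →L[ℝ] E3)).toLinearMap.comp crossL)

/-- Structural identity `∇^⊥n⃗ = n⃗ × ∇n⃗ - 2H ∇^⊥Φ⃗` (componentwise) for a smooth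
conformal immersion. -/
theorem structural_identity (D : Set E2) (hD : IsOpen D)
    (Φ : E2 → E3) (n : E2 → E3) (lam H : E2 → ℝ)
    (hΦ : ContDiffOn ℝ (⊤ : ℕ∞) Φ D) (hlam : ContDiffOn ℝ (⊤ : ℕ∞) lam D)
    (hconf : ∀ x ∈ D, ∀ i j : Fin 2,
      ⟪pd i Φ x, pd j Φ x⟫ = if i = j then exp (2 * lam x) else 0)
    (hn : ∀ x ∈ D, n x = exp (-(2 * lam x)) • cross3 (pd 0 Φ x) (pd 1 Φ x))
    (hH : ∀ x ∈ D, lap Φ x = (2 * exp (2 * lam x) * H x) • n x) :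
    ∀ x ∈ D,
      -(pd 1 n x) = cross3 (n x) (pd 0 n x) + (2 * H x) • pd 1 Φ x ∧
      pd 0 n x = cross3 (n x) (pd 1 n x) - (2 * H x) • pd 0 Φ x := by
  intro x hx
  have hDn : D ∈ 𝓝 x := hD.mem_nhds hx
  -- smoothness of the first derivatives
  have hΦ' : ContDiffOn ℝ (⊤ : ℕ∞) Φ D := hΦ.of_le (by simp)
  have hlam' : ContDiffOn ℝ (⊤ : ℕ∞) lam D := hlam.of_le (by simp)
  have hfd : ContDiffOn ℝ (⊤ : ℕ∞) (fderiv ℝ Φ) D :=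
    ((contDiffOn_infty_iff_fderiv_of_isOpen hD).mp hΦ').2
  have hpd : ∀ j : Fin 2, ContDiffOn ℝ (⊤ : ℕ∞) (pd j Φ) D := fun j =>
    hfd.clm_apply contDiffOn_const
  have hpdAt : ∀ j : Fin 2, DifferentiableAt ℝ (pd j Φ) x := fun j =>
    ((hpd j).contDiffAt hDn).differentiableAt (by simp)
  -- differentiability of n at x
  have hN0 : ContDiffOn ℝ (⊤ : ℕ∞)
      (fun y => Real.exp (-(2 * lam y)) • cross3 (pd 0 Φ y) (pd 1 Φ y)) D := by
    have h1 : ContDiffOn ℝ (⊤ : ℕ∞) (fun y => Real.exp (-(2 * lam y))) D :=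
      ((contDiffOn_const.mul hlam').neg).exp
    have h2 : ContDiffOn ℝ (⊤ : ℕ∞) (fun y => crossCLM (pd 0 Φ y) (pd 1 Φ y)) D :=
      (crossCLM.contDiff.comp_contDiffOn (hpd 0)).clm_apply (hpd 1)
    exact (h1.smul h2).congr fun y _ => rfl
  have hnev : n =ᶠ[𝓝 x]
      fun y => Real.exp (-(2 * lam y)) • cross3 (pd 0 Φ y) (pd 1 Φ y) :=
    Filter.eventuallyEq_of_mem hDn hn
  have hnAt : DifferentiableAt ℝ n x :=
    hnev.differentiableAt_iff.mpr
      ((hN0.contDiffAt hDn).differentiableAt (by simp))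
  have hfdAt : DifferentiableAt ℝ (fderiv ℝ Φ) x :=
    (hfd.contDiffAt hDn).differentiableAt (by simp)
  -- derivative of functions constant on D vanishes
  have pdconst : ∀ (i : Fin 2) (f : E2 → ℝ) (c : ℝ),
      (∀ y ∈ D, f y = c) → pd i f x = 0 := by
    intro i f c hf
    have h : f =ᶠ[𝓝 x] fun _ => c := Filter.eventuallyEq_of_mem hDn hf
    rw [pd, h.fderiv_eq]
    simp
  -- conformal data at x
  have haa : ⟪pd 0 Φ x, pd 0 Φ x⟫ = Real.exp (2 * lam x) := by
    simpa using hconf x hx 0 0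
  have hbb : ⟪pd 1 Φ x, pd 1 Φ x⟫ = Real.exp (2 * lam x) := by
    simpa using hconf x hx 1 1
  have hab : ⟪pd 0 Φ x, pd 1 Φ x⟫ = 0 := by
    simpa using hconf x hx 0 1
  have hba : ⟪pd 1 Φ x, pd 0 Φ x⟫ = 0 := by
    rw [real_inner_comm]; exact hab
  have hexp : Real.exp (2 * lam x) ≠ 0 := (Real.exp_pos _).ne'
  have hnx : n x = (Real.exp (2 * lam x))⁻¹ • cross3 (pd 0 Φ x) (pd 1 Φ x) := by
    rw [hn x hx, Real.exp_neg]
  -- unit normal on D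
  have hunit : ∀ y ∈ D, ⟪n y, n y⟫ = 1 := by
    intro y hy
    have haa' : ⟪pd 0 Φ y, pd 0 Φ y⟫ = Real.exp (2 * lam y) := by
      simpa using hconf y hy 0 0
    have hbb' : ⟪pd 1 Φ y, pd 1 Φ y⟫ = Real.exp (2 * lam y) := by
      simpa using hconf y hy 1 1
    have hab' : ⟪pd 0 Φ y, pd 1 Φ y⟫ = 0 := by
      simpa using hconf y hy 0 1
    rw [hn y hy, real_inner_smul_left, real_inner_smul_right, lagrange3,
      haa', hbb', hab', Real.exp_neg]
    have : Real.exp (2 * lam y) ≠ 0 := (Real.exp_pos _).ne'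
    field_simp
    ring
  -- orthogonality of n to the tangent vectors on D
  have horthD : ∀ (j : Fin 2), ∀ y ∈ D, ⟪n y, pd j Φ y⟫ = 0 := by
    intro j y hy
    rw [hn y hy, real_inner_smul_left]
    fin_cases j
    · show Real.exp (-(2 * lam y)) * ⟪cross3 (pd 0 Φ y) (pd 1 Φ y), pd 0 Φ y⟫ = 0
      rw [inner_cross_left, mul_zero]
    · show Real.exp (-(2 * lam y)) * ⟪cross3 (pd 0 Φ y) (pd 1 Φ y), pd 1 Φ y⟫ = 0
      rw [inner_cross_right, mul_zero]
  -- differentiating ⟪n, ∂ⱼΦ⟫ = 0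
  have key : ∀ i j : Fin 2,
      ⟪pd i n x, pd j Φ x⟫ = -⟪n x, pd i (pd j Φ) x⟫ := by
    intro i j
    have hz : pd i (fun y => ⟪n y, pd j Φ y⟫) x = 0 :=
      pdconst i _ 0 (horthD j)
    rw [pd, fderiv_inner_apply ℝ hnAt (hpdAt j)] at hz
    show ⟪fderiv ℝ n x (EuclideanSpace.single i 1), pd j Φ x⟫
      = -⟪n x, fderiv ℝ (pd j Φ) x (EuclideanSpace.single i 1)⟫
    linarith [hz]
  -- differentiating ⟪n, n⟫ = 1
  have keyn : ∀ i : Fin 2, ⟪n x, pd i n x⟫ = 0 := by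
    intro i
    have hz : pd i (fun y => ⟪n y, n y⟫) x = 0 := pdconst i _ 1 hunit
    rw [pd, fderiv_inner_apply ℝ hnAt hnAt] at hz
    have hc : ⟪fderiv ℝ n x (EuclideanSpace.single i 1), n x⟫
        = ⟪n x, fderiv ℝ n x (EuclideanSpace.single i 1)⟫ := real_inner_comm _ _
    show ⟪n x, fderiv ℝ n x (EuclideanSpace.single i 1)⟫ = 0
    linarith [hz]
  -- symmetry of second derivatives
  have hpd2 : ∀ i j : Fin 2, pd i (pd j Φ) x
      = fderiv ℝ (fderiv ℝ Φ) x (EuclideanSpace.single i 1) (EuclideanSpace.single j 1) := by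
    intro i j
    show fderiv ℝ (fun y => (fderiv ℝ Φ y) (EuclideanSpace.single j 1)) x
      (EuclideanSpace.single i 1) = _
    rw [fderiv_clm_apply hfdAt (differentiableAt_const _)]
    simp
  have hsymm : pd 0 (pd 1 Φ) x = pd 1 (pd 0 Φ) x := by
    rw [hpd2, hpd2]
    exact ((hΦ.contDiffAt hDn).isSymmSndFDerivAt (by rw [minSmoothness_of_isRCLikeNormedField]; exact WithTop.coe_le_coe.mpr (le_top : (2 : ℕ∞) ≤ ⊤))) _ _
  -- the second fundamental form coefficients
  set L := ⟪n x, pd 0 (pd 0 Φ) x⟫ with hLdef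
  set M := ⟪n x, pd 0 (pd 1 Φ) x⟫ with hMdef
  set N := ⟪n x, pd 1 (pd 1 Φ) x⟫ with hNdef
  have hM' : ⟪n x, pd 1 (pd 0 Φ) x⟫ = M := by rw [hMdef, hsymm]
  have h00 : ⟪pd 0 n x, pd 0 Φ x⟫ = -L := key 0 0
  have h01 : ⟪pd 0 n x, pd 1 Φ x⟫ = -M := key 0 1
  have h10 : ⟪pd 1 n x, pd 0 Φ x⟫ = -M := by rw [key 1 0, hM']
  have h11 : ⟪pd 1 n x, pd 1 Φ x⟫ = -N := key 1 1
  -- trace identity from the mean curvature equation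
  have hone : ⟪n x, n x⟫ = 1 := hunit x hx
  have hLN : L + N = 2 * Real.exp (2 * lam x) * H x := by
    have h := congrArg (fun v : E3 => ⟪n x, v⟫) (hH x hx)
    rw [show lap Φ x = pd 0 (pd 0 Φ) x + pd 1 (pd 1 Φ) x from rfl,
      inner_add_right, real_inner_smul_right, hone] at h
    rw [hLdef, hNdef]
    linarith [h]
  -- structure of inner products with cross3 (n x) u
  have hcra : ∀ u : E3, ⟪pd 0 Φ x, cross3 (n x) u⟫ = -⟪pd 1 Φ x, u⟫ := by
    intro u
    rw [real_inner_comm, triple3, hnx, cross3_smul_right, cross_cross3,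
      real_inner_smul_left, inner_sub_left, real_inner_smul_left,
      real_inner_smul_left, hab, haa]
    field_simp
    try ring
  have hcrb : ∀ u : E3, ⟪pd 1 Φ x, cross3 (n x) u⟫ = ⟪pd 0 Φ x, u⟫ := by
    intro u
    rw [real_inner_comm, triple3, hnx, cross3_smul_right, cross_cross3,
      real_inner_smul_left, inner_sub_left, real_inner_smul_left,
      real_inner_smul_left, hba, hbb]
    field_simp
    try ring
  have hcrn : ∀ u : E3, ⟪n x, cross3 (n x) u⟫ = 0 := by
    intro u
    rw [real_inner_comm, inner_cross_left]
  -- commuted versions of the inner product values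
  have h00' : ⟪pd 0 Φ x, pd 0 n x⟫ = -L := by rw [real_inner_comm]; exact h00
  have h01' : ⟪pd 1 Φ x, pd 0 n x⟫ = -M := by rw [real_inner_comm]; exact h01
  have h10' : ⟪pd 0 Φ x, pd 1 n x⟫ = -M := by rw [real_inner_comm]; exact h10
  have h11' : ⟪pd 1 Φ x, pd 1 n x⟫ = -N := by rw [real_inner_comm]; exact h11
  have hna : ⟪pd 0 Φ x, n x⟫ = 0 := by rw [real_inner_comm]; exact horthD 0 x hx
  have hnb : ⟪pd 1 Φ x, n x⟫ = 0 := by rw [real_inner_comm]; exact horthD 1 x hx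
  -- the orthonormal frame
  have he2 : Real.exp (2 * lam x) = Real.exp (lam x) * Real.exp (lam x) := by
    rw [two_mul, Real.exp_add]
  have hexp1 : Real.exp (lam x) ≠ 0 := (Real.exp_pos _).ne'
  have g00 : ⟪(Real.exp (lam x))⁻¹ • pd 0 Φ x, (Real.exp (lam x))⁻¹ • pd 0 Φ x⟫ = 1 := by
    rw [real_inner_smul_left, real_inner_smul_right, haa, he2]; field_simp
  have g11 : ⟪(Real.exp (lam x))⁻¹ • pd 1 Φ x, (Real.exp (lam x))⁻¹ • pd 1 Φ x⟫ = 1 := by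
    rw [real_inner_smul_left, real_inner_smul_right, hbb, he2]; field_simp
  have g01 : ⟪(Real.exp (lam x))⁻¹ • pd 0 Φ x, (Real.exp (lam x))⁻¹ • pd 1 Φ x⟫ = 0 := by
    rw [real_inner_smul_left, real_inner_smul_right, hab]; ring
  have g10 : ⟪(Real.exp (lam x))⁻¹ • pd 1 Φ x, (Real.exp (lam x))⁻¹ • pd 0 Φ x⟫ = 0 := by
    rw [real_inner_smul_left, real_inner_smul_right, hba]; ring
  have g02 : ⟪(Real.exp (lam x))⁻¹ • pd 0 Φ x, n x⟫ = 0 := by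
    rw [real_inner_smul_left, hna]; ring
  have g20 : ⟪n x, (Real.exp (lam x))⁻¹ • pd 0 Φ x⟫ = 0 := by
    rw [real_inner_smul_right, horthD 0 x hx]; ring
  have g12 : ⟪(Real.exp (lam x))⁻¹ • pd 1 Φ x, n x⟫ = 0 := by
    rw [real_inner_smul_left, hnb]; ring
  have g21 : ⟪n x, (Real.exp (lam x))⁻¹ • pd 1 Φ x⟫ = 0 := by
    rw [real_inner_smul_right, horthD 1 x hx]; ring
  have n00 : ‖(Real.exp (lam x))⁻¹ • pd 0 Φ x‖ = 1 := by
    have h := g00; rw [real_inner_self_eq_norm_sq] at h; exact (pow_eq_one_iff_of_nonneg (norm_nonneg _) two_ne_zero).mp h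
  have n11 : ‖(Real.exp (lam x))⁻¹ • pd 1 Φ x‖ = 1 := by
    have h := g11; rw [real_inner_self_eq_norm_sq] at h; exact (pow_eq_one_iff_of_nonneg (norm_nonneg _) two_ne_zero).mp h
  have n22 : ‖n x‖ = 1 := by
    have h := hone; rw [real_inner_self_eq_norm_sq] at h; exact (pow_eq_one_iff_of_nonneg (norm_nonneg _) two_ne_zero).mp h
  have hforth : Orthonormal ℝ
      ![(Real.exp (lam x))⁻¹ • pd 0 Φ x, (Real.exp (lam x))⁻¹ • pd 1 Φ x, n x] := by
    rw [orthonormal_iff_ite]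
    intro i j
    fin_cases i <;> fin_cases j <;>
      simp only [Matrix.cons_val_zero, Matrix.cons_val_one, Matrix.head_cons,
        Matrix.cons_val_two, Matrix.tail_cons, Fin.isValue,
          g00, g01, g02, g10, g11, g12, g20, g21, hone] <;>
      norm_num [g00, g01, g02, g10, g11, g12, g20, g21, hone, Fin.ext_iff, n00, n11, n22]
  refine ⟨?_, ?_⟩
  · -- first identity
    have hw : cross3 (n x) (pd 0 n x) + (2 * H x) • pd 1 Φ x + pd 1 n x = 0 := by
      apply orth_zero _ hforth
      intro i
      fin_cases i
      · show ⟪(Real.exp (lam x))⁻¹ • pd 0 Φ x,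
          cross3 (n x) (pd 0 n x) + (2 * H x) • pd 1 Φ x + pd 1 n x⟫ = 0
        rw [real_inner_smul_left, inner_add_right, inner_add_right, hcra,
          real_inner_smul_right, hab, h01', h10']
        ring
      · show ⟪(Real.exp (lam x))⁻¹ • pd 1 Φ x,
          cross3 (n x) (pd 0 n x) + (2 * H x) • pd 1 Φ x + pd 1 n x⟫ = 0
        rw [real_inner_smul_left, inner_add_right, inner_add_right, hcrb,
          real_inner_smul_right, hbb, h00', h11']
        have hz : -L + 2 * H x * Real.exp (2 * lam x) + -N = 0 := by linarith [hLN]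
        rw [hz, mul_zero]
      · show ⟪n x,
          cross3 (n x) (pd 0 n x) + (2 * H x) • pd 1 Φ x + pd 1 n x⟫ = 0
        rw [inner_add_right, inner_add_right, hcrn, real_inner_smul_right,
          horthD 1 x hx, keyn 1]
        ring
    exact neg_eq_of_add_eq_zero_left hw
  · -- second identity
    have hw : cross3 (n x) (pd 1 n x) - (2 * H x) • pd 0 Φ x - pd 0 n x = 0 := by
      apply orth_zero _ hforth
      intro i
      fin_cases i
      · show ⟪(Real.exp (lam x))⁻¹ • pd 0 Φ x,
          cross3 (n x) (pd 1 n x) - (2 * H x) • pd 0 Φ x - pd 0 n x⟫ = 0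
        rw [real_inner_smul_left, inner_sub_right, inner_sub_right, hcra,
          real_inner_smul_right, haa, h11', h00']
        have hz : -(-N) - 2 * H x * Real.exp (2 * lam x) - -L = 0 := by linarith [hLN]
        rw [hz, mul_zero]
      · show ⟪(Real.exp (lam x))⁻¹ • pd 1 Φ x,
          cross3 (n x) (pd 1 n x) - (2 * H x) • pd 0 Φ x - pd 0 n x⟫ = 0
        rw [real_inner_smul_left, inner_sub_right, inner_sub_right, hcrb,
          real_inner_smul_right, hba, h10', h01']
        ring
      · show ⟪n x,
          cross3 (n x) (pd 1 n x) - (2 * H x) • pd 0 Φ x - pd 0 n x⟫ = 0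
        rw [inner_sub_right, inner_sub_right, hcrn, real_inner_smul_right,
          horthD 0 x hx, keyn 0]
        ring
    exact (sub_eq_zero.mp hw).symm

end
end

section
/- Let a(x) be a measurable function on the unit disk D² with c₀⁻¹ ≤ a(x) ≤ c₀, let A > 0, p ∈ [2,3], and define S(f) := [(A² + a(x)²|f|²)^{(p-2)/2} / (A² + ‖f‖_p²)^{(p-2)/2}] f. Then for any f ∈ L^p(D²), S maps L^p into L^{p_0} for appropriate exponents; in particular ‖S_z(f)‖_{p_a} ≤ C [1 + (‖f‖_p²/(A²+‖f‖_p²))^{a/2}] ‖f‖_p, where for z = a+ib ∈ D²_{1/2}, S_z(f) := [(A²+a(x)²|f|²)^{1/2}/(A²+‖f‖_p²)^{1/2}]^z f and p_a := p/(1+a). -/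
open MeasureTheory Metric Real
open scoped ENNReal NNReal RealInnerProductSpace

noncomputable section

/-!
Write `r = Re z`, `W = A² + ‖f‖_p²` and `w = (A² + a²f²)/W`, so that `|S_z f| = w^{r/2} |f|`.
For `r ≥ 0`, subadditivity of `t ↦ t^{r/2}` and `A² ≤ W` give
`|S_z f| ≤ |f| + c₀^r W^{-r/2} |f|^{1+r}`; for `r < 0` one drops `A²` from `w` instead and gets
`|S_z f| ≤ c₀^{-r} W^{-r/2} |f|^{1+r}`. Since `‖|f|^{1+r}‖_{p_a} = ‖f‖_p^{1+r}` and, by Hölder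
on the disk, `‖f‖_{p_a} ≤ |D|^{r/p} ‖f‖_p` when `r ≥ 0`, Minkowski's inequality gives the bound,
because `W^{-r/2} ‖f‖_p^{1+r} = (‖f‖_p²/W)^{r/2} ‖f‖_p`.
-/

theorem rpow_le_one_add_self {c s : ℝ} (hc : 0 ≤ c) (hs0 : 0 ≤ s) (hs1 : s ≤ 1) :
    c ^ s ≤ 1 + c := by
  rcases le_total c 1 with h | h
  · linarith [Real.rpow_le_one hc h hs0]
  · calc c ^ s ≤ c ^ (1 : ℝ) := Real.rpow_le_rpow_of_exponent_le h hs1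
      _ ≤ 1 + c := by rw [Real.rpow_one]; linarith

theorem rpow_add_le_add_rpow_of_nonneg {x y s : ℝ} (hx : 0 ≤ x) (hy : 0 ≤ y) (hs0 : 0 ≤ s)
    (hs1 : s ≤ 1) : (x + y) ^ s ≤ x ^ s + y ^ s :=
  NNReal.rpow_add_le_add_rpow ⟨x, hx⟩ ⟨y, hy⟩ hs0 hs1

theorem sq_mul_sq_div_rpow_half {c t W : ℝ} (r : ℝ) (hc : 0 ≤ c) (hW : 0 < W) :
    (c ^ 2 * t ^ 2 / W) ^ (r / 2) = c ^ r * W ^ (-(r / 2)) * |t| ^ r := by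
  rw [Real.div_rpow (by positivity) hW.le, Real.mul_rpow (by positivity) (by positivity),
    Real.rpow_div_two_eq_sqrt _ (sq_nonneg c), Real.rpow_div_two_eq_sqrt _ (sq_nonneg t),
    Real.sqrt_sq hc, Real.sqrt_sq_eq_abs, Real.rpow_neg hW.le]
  ring

theorem rpow_neg_half_mul_rpow_one_add {N W r : ℝ} (hN : 0 ≤ N) (hW : 0 < W) (hr : 1 + r ≠ 0) :
    W ^ (-(r / 2)) * N ^ (1 + r) = (N ^ 2 / W) ^ (r / 2) * N := by
  rw [Real.rpow_add' hN hr, Real.rpow_one, Real.div_rpow (sq_nonneg N) hW.le,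
    Real.rpow_div_two_eq_sqrt _ (sq_nonneg N), Real.sqrt_sq hN, Real.rpow_neg hW.le]
  ring

section PointwiseBounds

variable {A N b t c r : ℝ}

theorem rpow_div_mul_abs_le_of_nonneg (hW : 0 < A ^ 2 + N ^ 2) (hr0 : 0 ≤ r) (hr1 : r ≤ 2)
    (hb : |b| ≤ c) :
    ((A ^ 2 + b ^ 2 * t ^ 2) / (A ^ 2 + N ^ 2)) ^ (r / 2) * |t|
      ≤ |t| + c ^ r * (A ^ 2 + N ^ 2) ^ (-(r / 2)) * |t| ^ (1 + r) := by
  set W := A ^ 2 + N ^ 2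
  have hc : 0 ≤ c := (abs_nonneg b).trans hb
  have hsplit : (A ^ 2 + b ^ 2 * t ^ 2) / W ≤ A ^ 2 / W + c ^ 2 * t ^ 2 / W := by
    have hb2 : b ^ 2 ≤ c ^ 2 := sq_le_sq' (neg_le_of_abs_le hb) (le_of_abs_le hb)
    rw [← add_div]
    exact div_le_div_of_nonneg_right (by nlinarith [sq_nonneg t]) hW.le
  have hA : (A ^ 2 / W) ^ (r / 2) ≤ 1 :=
    Real.rpow_le_one (by positivity) ((div_le_one hW).2 (le_add_of_nonneg_right (sq_nonneg N)))
      (by linarith)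
  have hpow : ((A ^ 2 + b ^ 2 * t ^ 2) / W) ^ (r / 2) ≤ 1 + c ^ r * W ^ (-(r / 2)) * |t| ^ r :=
    calc ((A ^ 2 + b ^ 2 * t ^ 2) / W) ^ (r / 2)
        ≤ (A ^ 2 / W + c ^ 2 * t ^ 2 / W) ^ (r / 2) :=
          Real.rpow_le_rpow (by positivity) hsplit (by linarith)
      _ ≤ (A ^ 2 / W) ^ (r / 2) + (c ^ 2 * t ^ 2 / W) ^ (r / 2) :=
          rpow_add_le_add_rpow_of_nonneg (by positivity) (by positivity) (by linarith)
            (by linarith)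
      _ ≤ 1 + c ^ r * W ^ (-(r / 2)) * |t| ^ r := by
          rw [sq_mul_sq_div_rpow_half r hc hW]; linarith
  calc ((A ^ 2 + b ^ 2 * t ^ 2) / W) ^ (r / 2) * |t|
      ≤ (1 + c ^ r * W ^ (-(r / 2)) * |t| ^ r) * |t| := by gcongr
    _ = |t| + c ^ r * W ^ (-(r / 2)) * |t| ^ (1 + r) := by
      rw [add_comm 1 r, Real.rpow_add' (abs_nonneg t) (by linarith), Real.rpow_one]; ring

theorem rpow_div_mul_abs_le_of_nonpos (hW : 0 < A ^ 2 + N ^ 2) (hr : r ≤ 0) (hr1 : -1 < r)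
    (hc : 0 < c) (hb : c⁻¹ ≤ |b|) :
    ((A ^ 2 + b ^ 2 * t ^ 2) / (A ^ 2 + N ^ 2)) ^ (r / 2) * |t|
      ≤ c ^ (-r) * (A ^ 2 + N ^ 2) ^ (-(r / 2)) * |t| ^ (1 + r) := by
  set W := A ^ 2 + N ^ 2
  rcases eq_or_ne t 0 with rfl | ht
  · simp only [abs_zero, mul_zero]; positivity
  have hlow : c⁻¹ ^ 2 * t ^ 2 / W ≤ (A ^ 2 + b ^ 2 * t ^ 2) / W := by
    have hb2 : c⁻¹ ^ 2 ≤ b ^ 2 := by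
      rw [← sq_abs b]; exact pow_le_pow_left₀ (by positivity) hb 2
    exact div_le_div_of_nonneg_right (by nlinarith [sq_nonneg t, sq_nonneg A]) hW.le
  calc ((A ^ 2 + b ^ 2 * t ^ 2) / W) ^ (r / 2) * |t|
      ≤ (c⁻¹ ^ 2 * t ^ 2 / W) ^ (r / 2) * |t| :=
        mul_le_mul_of_nonneg_right
          (Real.rpow_le_rpow_of_nonpos (by positivity) hlow (by linarith)) (abs_nonneg t)
    _ = c ^ (-r) * W ^ (-(r / 2)) * |t| ^ (1 + r) := by
      rw [sq_mul_sq_div_rpow_half r (inv_nonneg.2 hc.le) hW, Real.inv_rpow hc.le,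
        ← Real.rpow_neg hc.le, add_comm 1 r, Real.rpow_add' (abs_nonneg t) (by linarith),
        Real.rpow_one]
      ring

end PointwiseBounds

section LpBounds

variable {α E : Type*} [MeasurableSpace α] {μ : Measure α} [NormedAddCommGroup E]

theorem integral_norm_rpow_rpow_inv_le_of_eLpNorm_le {g : α → E} {q B : ℝ} (hq : 0 < q)
    (hB : 0 ≤ B) (hg : eLpNorm g (ENNReal.ofReal q) μ ≤ ENNReal.ofReal B) :
    (∫ x, ‖g x‖ ^ q ∂μ) ^ q⁻¹ ≤ B := by
  have hint : ENNReal.ofReal (∫ x, ‖g x‖ ^ q ∂μ) ≤ eLpNorm g (ENNReal.ofReal q) μ ^ q := by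
    -- no measurability of `g` is needed: a non-integrable `‖g‖ ^ q` has Bochner integral `0`
    by_cases hi : Integrable (fun x => ‖g x‖ ^ q) μ
    · rw [ofReal_integral_eq_lintegral_ofReal hi (ae_of_all _ fun x => by positivity),
        eLpNorm_eq_lintegral_rpow_enorm_toReal (by simpa using hq) ENNReal.ofReal_ne_top,
        ENNReal.toReal_ofReal hq.le, ← ENNReal.rpow_mul, one_div, inv_mul_cancel₀ hq.ne',
        ENNReal.rpow_one]
      refine le_of_eq (lintegral_congr fun x => ?_)
      rw [← ofReal_norm, ENNReal.ofReal_rpow_of_nonneg (norm_nonneg _) hq.le]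
    · simp [integral_undef hi]
  calc (∫ x, ‖g x‖ ^ q ∂μ) ^ q⁻¹ ≤ (B ^ q) ^ q⁻¹ := by
        gcongr
        rw [← ENNReal.ofReal_le_ofReal_iff (by positivity),
          ← ENNReal.ofReal_rpow_of_nonneg hB hq.le]
        exact hint.trans (by gcongr)
    _ = B := Real.rpow_rpow_inv hB hq.ne'

theorem memLp_ofReal_of_integrable_abs_rpow {f : α → ℝ} {p : ℝ} (hf : AEStronglyMeasurable f μ)
    (hp : 0 < p) (hint : Integrable (fun x => |f x| ^ p) μ) : MemLp f (ENNReal.ofReal p) μ := by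
  refine (integrable_norm_rpow_iff hf (by simpa using hp) ENNReal.ofReal_ne_top).1 ?_
  simpa [ENNReal.toReal_ofReal hp.le] using hint

theorem MemLp.toReal_eLpNorm_ofReal_eq {f : α → ℝ} {p : ℝ} (hf : MemLp f (ENNReal.ofReal p) μ)
    (hp : 0 < p) : (eLpNorm f (ENNReal.ofReal p) μ).toReal = (∫ x, |f x| ^ p ∂μ) ^ (1 / p) := by
  rw [hf.eLpNorm_eq_integral_rpow_norm (by simpa using hp) ENNReal.ofReal_ne_top,
    ENNReal.toReal_ofReal (by positivity), ENNReal.toReal_ofReal hp.le, one_div]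
  simp only [Real.norm_eq_abs]

theorem eLpNorm_le_of_norm_le_mul_abs_rpow {g : α → E} {f : α → ℝ} {p s K : ℝ} (hs : 0 < s)
    (hK : 0 ≤ K) (hf : MemLp f (ENNReal.ofReal p) μ) (h : ∀ᵐ x ∂μ, ‖g x‖ ≤ K * |f x| ^ s) :
    eLpNorm g (ENNReal.ofReal (p / s)) μ
      ≤ ENNReal.ofReal (K * (eLpNorm f (ENNReal.ofReal p) μ).toReal ^ s) := by
  calc eLpNorm g (ENNReal.ofReal (p / s)) μ
      ≤ eLpNorm (K • fun x => ‖f x‖ ^ s) (ENNReal.ofReal (p / s)) μ :=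
        eLpNorm_mono_ae <| h.mono fun x hx => by
          rwa [Pi.smul_apply, smul_eq_mul, Real.norm_of_nonneg (by positivity : 0 ≤ K * ‖f x‖ ^ s),
            Real.norm_eq_abs]
    _ = ENNReal.ofReal K * eLpNorm f (ENNReal.ofReal p) μ ^ s := by
        rw [eLpNorm_const_smul, eLpNorm_norm_rpow f hs, ← ENNReal.ofReal_mul' hs.le,
          div_mul_cancel₀ p hs.ne', Real.enorm_of_nonneg hK]
    _ = _ := by
        rw [ENNReal.ofReal_mul hK, ← ENNReal.ofReal_rpow_of_nonneg ENNReal.toReal_nonneg hs.le,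
          ENNReal.ofReal_toReal hf.eLpNorm_ne_top]

theorem eLpNorm_le_of_norm_le_abs_add_mul_abs_rpow [IsFiniteMeasure μ] {g : α → E} {f : α → ℝ}
    {p s K : ℝ} (hs : 1 ≤ s) (hsp : s ≤ p) (hK : 0 ≤ K) (hf : MemLp f (ENNReal.ofReal p) μ)
    (h : ∀ᵐ x ∂μ, ‖g x‖ ≤ |f x| + K * |f x| ^ s) :
    eLpNorm g (ENNReal.ofReal (p / s)) μ
      ≤ ENNReal.ofReal (μ.real Set.univ ^ ((s - 1) / p) * (eLpNorm f (ENNReal.ofReal p) μ).toReal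
          + K * (eLpNorm f (ENNReal.ofReal p) μ).toReal ^ s) := by
  set N := (eLpNorm f (ENNReal.ofReal p) μ).toReal
  have hp : 0 < p := by linarith
  have hholder : eLpNorm f (ENNReal.ofReal (p / s)) μ
      ≤ ENNReal.ofReal (μ.real Set.univ ^ ((s - 1) / p) * N) := by
    refine (eLpNorm_le_eLpNorm_mul_rpow_measure_univ
      (ENNReal.ofReal_le_ofReal (div_le_self hp.le hs)) hf.1).trans (le_of_eq ?_)
    rw [ENNReal.ofReal_mul (by positivity), ← ENNReal.ofReal_rpow_of_nonneg measureReal_nonneg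
      (by bound), ofReal_measureReal, ENNReal.ofReal_toReal hf.eLpNorm_ne_top,
      ENNReal.toReal_ofReal (by positivity), ENNReal.toReal_ofReal hp.le, mul_comm]
    congr 2
    field_simp
  calc eLpNorm g (ENNReal.ofReal (p / s)) μ
      ≤ eLpNorm ((fun x => |f x|) + fun x => K * |f x| ^ s) (ENNReal.ofReal (p / s)) μ :=
        eLpNorm_mono_ae <| h.mono fun x hx => hx.trans (le_abs_self _)
    _ ≤ eLpNorm (fun x => |f x|) (ENNReal.ofReal (p / s)) μ
          + eLpNorm (fun x => K * |f x| ^ s) (ENNReal.ofReal (p / s)) μ :=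
        eLpNorm_add_le hf.1.norm
          ((hf.1.aemeasurable.abs.pow_const s).const_mul K).aestronglyMeasurable
          (ENNReal.one_le_ofReal.2 ((one_le_div (by positivity)).2 hsp))
    _ ≤ ENNReal.ofReal (μ.real Set.univ ^ ((s - 1) / p) * N) + ENNReal.ofReal (K * N ^ s) :=
        add_le_add (by simpa [← Real.norm_eq_abs] using hholder)
          (eLpNorm_le_of_norm_le_mul_abs_rpow (by positivity) hK hf
            (ae_of_all _ fun x => (Real.norm_of_nonneg (by positivity)).le))
    _ = _ := (ENNReal.ofReal_add (by positivity) (by positivity)).symm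

end LpBounds

section AnalyticFamily

variable {α : Type*}

/-- `S_z f` of the paper, with the parameter `N` in place of `‖f‖_p`. -/
def analyticFamily (A N : ℝ) (a f : α → ℝ) (z : ℂ) (x : α) : ℂ :=
  (((A ^ 2 + (a x) ^ 2 * (f x) ^ 2) / (A ^ 2 + N ^ 2) : ℝ) : ℂ) ^ (z / 2) * (f x : ℂ)

theorem norm_analyticFamily {A N : ℝ} {a f : α → ℝ} {z : ℂ} (hA : A ≠ 0) (x : α) :
    ‖analyticFamily A N a f z x‖
      = ((A ^ 2 + (a x) ^ 2 * (f x) ^ 2) / (A ^ 2 + N ^ 2)) ^ (z.re / 2) * |f x| := by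
  have hw : 0 < (A ^ 2 + (a x) ^ 2 * (f x) ^ 2) / (A ^ 2 + N ^ 2) := by positivity
  rw [analyticFamily, norm_mul, Complex.norm_cpow_eq_rpow_re_of_pos hw, Complex.norm_real,
    Real.norm_eq_abs, Complex.div_ofNat_re]

variable [MeasurableSpace α] {μ : Measure α} {c A p N : ℝ} {a f : α → ℝ} {z : ℂ}

theorem eLpNorm_analyticFamily_le_of_nonneg [IsFiniteMeasure μ] (hc : 0 ≤ c) (hA : A ≠ 0)
    (hp : 2 ≤ p) (hr0 : 0 ≤ z.re) (hr1 : z.re ≤ 1) (ha : ∀ᵐ x ∂μ, |a x| ≤ c)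
    (hf : MemLp f (ENNReal.ofReal p) μ) (hN : (eLpNorm f (ENNReal.ofReal p) μ).toReal = N) :
    eLpNorm (analyticFamily A N a f z) (ENNReal.ofReal (p / (1 + z.re))) μ
      ≤ ENNReal.ofReal (μ.real Set.univ ^ (z.re / p) * N
          + c ^ z.re * ((N ^ 2 / (A ^ 2 + N ^ 2)) ^ (z.re / 2) * N)) := by
  have hN0 : 0 ≤ N := hN ▸ ENNReal.toReal_nonneg
  have hW : 0 < A ^ 2 + N ^ 2 := by positivity
  refine (eLpNorm_le_of_norm_le_abs_add_mul_abs_rpow (g := analyticFamily A N a f z)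
    (s := 1 + z.re) (K := c ^ z.re * (A ^ 2 + N ^ 2) ^ (-(z.re / 2))) (by linarith)
    (by linarith) (by positivity) hf (ha.mono fun x hx => ?_)).trans_eq ?_
  · rw [norm_analyticFamily hA]
    exact rpow_div_mul_abs_le_of_nonneg hW hr0 (by linarith) hx
  · rw [hN, add_sub_cancel_left, mul_assoc, rpow_neg_half_mul_rpow_one_add hN0 hW (by linarith)]

theorem eLpNorm_analyticFamily_le_of_nonpos (hc : 0 < c) (hA : A ≠ 0) (hr0 : z.re ≤ 0)
    (hr1 : -1 < z.re) (ha : ∀ᵐ x ∂μ, c⁻¹ ≤ |a x|) (hf : MemLp f (ENNReal.ofReal p) μ)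
    (hN : (eLpNorm f (ENNReal.ofReal p) μ).toReal = N) :
    eLpNorm (analyticFamily A N a f z) (ENNReal.ofReal (p / (1 + z.re))) μ
      ≤ ENNReal.ofReal (c ^ (-z.re) * ((N ^ 2 / (A ^ 2 + N ^ 2)) ^ (z.re / 2) * N)) := by
  have hN0 : 0 ≤ N := hN ▸ ENNReal.toReal_nonneg
  have hW : 0 < A ^ 2 + N ^ 2 := by positivity
  refine (eLpNorm_le_of_norm_le_mul_abs_rpow (g := analyticFamily A N a f z)
    (s := 1 + z.re) (K := c ^ (-z.re) * (A ^ 2 + N ^ 2) ^ (-(z.re / 2))) (by linarith)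
    (by positivity) hf (ha.mono fun x hx => ?_)).trans_eq ?_
  · rw [norm_analyticFamily hA]
    exact rpow_div_mul_abs_le_of_nonpos hW hr0 hr1 hc hx
  · rw [hN, mul_assoc, rpow_neg_half_mul_rpow_one_add hN0 hW (by linarith)]

theorem eLpNorm_analyticFamily_le [IsFiniteMeasure μ] (hc : 0 < c) (hA : A ≠ 0) (hp : 2 ≤ p)
    (hz : |z.re| < 1) (ha : ∀ᵐ x ∂μ, c⁻¹ ≤ a x ∧ a x ≤ c) (hf : MemLp f (ENNReal.ofReal p) μ)
    (hN : (eLpNorm f (ENNReal.ofReal p) μ).toReal = N) :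
    eLpNorm (analyticFamily A N a f z) (ENNReal.ofReal (p / (1 + z.re))) μ
      ≤ ENNReal.ofReal
          ((2 + μ.real Set.univ + c) * (1 + (N ^ 2 / (A ^ 2 + N ^ 2)) ^ (z.re / 2)) * N) := by
  obtain ⟨hr1, hr2⟩ := abs_lt.1 hz
  have hN0 : 0 ≤ N := hN ▸ ENNReal.toReal_nonneg
  have hM : 0 ≤ μ.real Set.univ := measureReal_nonneg
  have hRN : 0 ≤ (N ^ 2 / (A ^ 2 + N ^ 2)) ^ (z.re / 2) * N := by positivity
  have habs : ∀ᵐ x ∂μ, c⁻¹ ≤ |a x| ∧ |a x| ≤ c := ha.mono fun x hx => by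
    rwa [abs_of_pos ((inv_pos.2 hc).trans_le hx.1)]
  rcases le_total 0 z.re with hr | hr
  · refine (eLpNorm_analyticFamily_le_of_nonneg hc.le hA hp hr hr2.le
      (habs.mono fun _ hx => hx.2) hf hN).trans (ENNReal.ofReal_le_ofReal ?_)
    have hMr : μ.real Set.univ ^ (z.re / p) ≤ 1 + μ.real Set.univ :=
      rpow_le_one_add_self hM (by positivity) ((div_le_one (by linarith)).2 (by linarith))
    have hcr : c ^ z.re ≤ 1 + c := rpow_le_one_add_self hc.le hr hr2.le
    nlinarith [mul_le_mul_of_nonneg_right hMr hN0, mul_le_mul_of_nonneg_right hcr hRN,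
      mul_nonneg hM hRN, mul_nonneg hc.le hN0]
  · refine (eLpNorm_analyticFamily_le_of_nonpos hc hA hr hr1
      (habs.mono fun _ hx => hx.1) hf hN).trans (ENNReal.ofReal_le_ofReal ?_)
    have hcr : c ^ (-z.re) ≤ 1 + c := rpow_le_one_add_self hc.le (by linarith) (by linarith)
    nlinarith [mul_le_mul_of_nonneg_right hcr hRN, mul_nonneg hM hRN, mul_nonneg hM hN0,
      mul_nonneg hc.le hN0]

end AnalyticFamily

/-- Estimate (A-8): the analytic family `S_z` satisfies
`‖S_z(f)‖_{p_a} ≤ C (1 + (‖f‖_p²/(A²+‖f‖_p²))^{a/2}) ‖f‖_p`, `a = Re z`,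
`p_a = p/(1+a)`, with `C` independent of `p ∈ [2,3]`, `z ∈ D_{1/2}`, `A` and `f`. -/
theorem Sz_norm_bound :
    ∀ c₀ > (0:ℝ), ∃ C > (0:ℝ), ∀ p ∈ Set.Icc (2:ℝ) 3, ∀ A > (0:ℝ),
      ∀ a : E2 → ℝ, (∀ x ∈ ball (0:E2) 1, c₀⁻¹ ≤ a x ∧ a x ≤ c₀) →
      ∀ z : ℂ, ‖z‖ < 1/2 →
      ∀ f : E2 → ℝ, Measurable f →
      IntegrableOn (fun x => |f x| ^ p) (ball (0:E2) 1) →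
      ∀ Nf : ℝ, Nf = (∫ x in ball (0:E2) 1, |f x| ^ p) ^ (1 / p) →
      ∀ Sz : E2 → ℂ, Sz = (fun x =>
        (((A ^ 2 + (a x) ^ 2 * (f x) ^ 2) / (A ^ 2 + Nf ^ 2) : ℝ) : ℂ) ^ (z / 2) *
          (f x : ℂ)) →
      (∫ x in ball (0:E2) 1, ‖Sz x‖ ^ (p / (1 + z.re))) ^
          ((1 + z.re) / p) ≤
        C * (1 + (Nf ^ 2 / (A ^ 2 + Nf ^ 2)) ^ (z.re / 2)) * Nf := by
  intro c₀ hc₀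
  have : IsFiniteMeasure (volume.restrict (ball (0 : E2) 1)) :=
    isFiniteMeasure_restrict.2 measure_ball_lt_top.ne
  refine ⟨2 + volume.real (ball (0 : E2) 1) + c₀, by positivity, ?_⟩
  rintro p ⟨hp, -⟩ A hA a ha z hz f hf hint Nf rfl Sz rfl
  have hr : |z.re| < 1 := (Complex.abs_re_le_norm z).trans_lt (by linarith)
  have hq : 0 < p / (1 + z.re) := div_pos (by linarith) (by linarith [(abs_lt.1 hr).1])
  have hfLp := memLp_ofReal_of_integrable_abs_rpow hf.aestronglyMeasurable (by linarith) hint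
  rw [← MemLp.toReal_eLpNorm_ofReal_eq hfLp (by linarith), ← inv_div p]
  refine integral_norm_rpow_rpow_inv_le_of_eLpNorm_le (g := analyticFamily A _ a f z) hq
    (by positivity) ?_
  simpa using eLpNorm_analyticFamily_le hc₀ hA.ne' hp hr
    (ae_restrict_of_forall_mem measurableSet_ball ha) hfLp rfl

end
end
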